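/- Let d ≥ 1 and let Γ be an additive sub-semigroup of ℕ^{d+1} that generates ℤ^{d+1} as a group. Let D be a compact convex subset of ℝ^d contained in the interior of Δ(Γ). Then there exists a finitely generated sub-semigroup Γ' ⊆ Γ such that Γ' generates ℤ^{d+1} as a group and D is contained in the interior of Δ(Γ'). -/

import Mathlib

/-!
Choose a finite `S₀ ⊆ Γ` that still generates `ℤ^{d+1}` (possible because `ℤ^{d+1}` is
Noetherian); its cone has an interior point `q`. If `p` is interior to `Σ(Γ)`, then `p - δ q`
lies in `Σ(Γ)` for small `δ > 0`, so a finite nonnegative combination `c` of elements of `Γ`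
close to it satisfies `p - c ∈ int cone(S₀)`, and then `p ∈ c + int cone(S₀) ⊆ int cone(S ∪ S₀)` for a finite
`S ⊆ Γ`. Since `Σ` is a cone, `x ∈ int Δ` iff `(x, 1) ∈ int Σ`, so the sets `int Δ(S)` with `S`
finite form a directed open cover of `D`, and compactness of `D` selects one of them.
-/

/-- The image of a vector of natural numbers in `ℝ^n`. -/
def natVecR {n : ℕ} (γ : Fin n → ℕ) : Fin n → ℝ := fun i => (γ i : ℝ)

/-- `Σ(Γ)`: the closed convex cone generated by `Γ ⊆ ℕ^n` in `ℝ^n`, i.e. the topological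
closure of the set of all finite nonnegative real linear combinations of elements of `Γ`. -/
def coneOf {n : ℕ} (Γ : Set (Fin n → ℕ)) : Set (Fin n → ℝ) :=
  closure { x | ∃ (k : ℕ) (c : Fin k → ℝ) (g : Fin k → (Fin n → ℕ)),
    (∀ i, 0 ≤ c i) ∧ (∀ i, g i ∈ Γ) ∧ x = ∑ i, c i • natVecR (g i) }

/-- `Δ(Γ) = {x ∈ ℝ^d : (x,1) ∈ Σ(Γ)}`. -/
def deltaOf {d : ℕ} (Γ : Set (Fin (d+1) → ℕ)) : Set (Fin d → ℝ) :=
  { x | Fin.snoc x (1 : ℝ) ∈ coneOf Γ }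

/-- `Γ` generates `ℤ^{d+1}` as a group. -/
def gensGroup {d : ℕ} (Γ : Set (Fin (d+1) → ℕ)) : Prop :=
  AddSubgroup.closure ((fun γ : Fin (d+1) → ℕ => (fun i => (γ i : ℤ))) '' Γ) = ⊤

open Set Filter Topology PointedCone Pointwise

section Cone

variable {E : Type*} [AddCommGroup E] [Module ℝ E] [TopologicalSpace E]

theorem PointedCone.smul_mem_interior [ContinuousConstSMul ℝ E] (C : PointedCone ℝ E) {r : ℝ}
    (hr : 0 < r) {x : E} (hx : x ∈ interior (C : Set E)) : r • x ∈ interior (C : Set E) := by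
  have hC : r • (C : Set E) ⊆ C := Set.smul_set_subset_iff.2 fun _ hy => C.smul_mem hr.le hy
  have hrx : r • x ∈ r • interior (C : Set E) := Set.smul_mem_smul_set hx
  rw [← interior_smul₀ hr.ne'] at hrx
  exact interior_mono hC hrx

theorem PointedCone.exists_finset_mem_interior_hull_union [IsTopologicalAddGroup E]
    [ContinuousSMul ℝ E] {s t : Set E} {q : E} (hq : q ∈ interior (hull ℝ t : Set E)) {p : E}
    (hp : p ∈ interior (closure (hull ℝ s : Set E))) :
    ∃ F : Finset E, ↑F ⊆ s ∧ p ∈ interior (hull ℝ (↑F ∪ t) : Set E) := by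
  obtain ⟨δ, hδp, hδ⟩ : ∃ δ : ℝ, p - δ • q ∈ interior (closure (hull ℝ s : Set E)) ∧ 0 < δ := by
    have hlim : Tendsto (fun δ : ℝ => p - δ • q) (𝓝[>] 0) (𝓝 p) :=
      (Continuous.tendsto' (by fun_prop) 0 p (by simp)).mono_left nhdsWithin_le_nhds
    exact ((hlim.eventually (isOpen_interior.mem_nhds hp)).and self_mem_nhdsWithin).exists
  obtain ⟨c, hpc, hc⟩ : ((fun c => p - c) ⁻¹' interior (hull ℝ t : Set E) ∩
      (hull ℝ s : Set E)).Nonempty :=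
    mem_closure_iff.1 (interior_subset hδp) _ (isOpen_interior.preimage (by fun_prop))
      (by simpa using (hull ℝ t).smul_mem_interior hδ hq)
  obtain ⟨F, hFs, hcF⟩ := Submodule.mem_span_finite_of_mem_span hc
  refine ⟨F, hFs, interior_maximal ?_ (isOpen_interior.preimage (continuous_sub_right c)) hpc⟩
  intro y hy
  rw [← add_sub_cancel c y]
  exact add_mem (Submodule.span_mono subset_union_left hcF)
    (Submodule.span_mono subset_union_right (interior_subset hy))

end Cone

theorem PointedCone.interior_hull_nonempty {E : Type*} [NormedAddCommGroup E] [NormedSpace ℝ E]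
    [FiniteDimensional ℝ E] {s : Set E} (hs : Submodule.span ℝ s = ⊤) :
    (interior (hull ℝ s : Set E)).Nonempty := by
  rw [(hull ℝ s).convex.interior_nonempty_iff_affineSpan_eq_top,
    AffineSubspace.affineSpan_eq_top_iff_vectorSpan_eq_top_of_nonempty ℝ E E ⟨0, zero_mem _⟩,
    vectorSpan_eq_span_vsub_set_right ℝ (zero_mem (hull ℝ s)), eq_top_iff, ← hs]
  exact Submodule.span_mono fun x hx => ⟨x, subset_hull hx, sub_zero x⟩

theorem coneOf_eq_closure_hull {n : ℕ} (Γ : Set (Fin n → ℕ)) :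
    coneOf Γ = closure (hull ℝ (natVecR '' Γ) : Set (Fin n → ℝ)) := by
  refine congrArg closure (Set.ext fun x => ⟨?_, fun hx => ?_⟩)
  · rintro ⟨k, c, g, hc, hg, rfl⟩
    exact sum_mem fun i _ => (hull ℝ _).smul_mem (hc i) (subset_hull ⟨g i, hg i, rfl⟩)
  · obtain ⟨k, c, v, rfl⟩ := Submodule.mem_span_set'.1 hx
    choose g hg hgv using fun i => (v i).2
    exact ⟨k, fun i => c i, g, fun i => (c i).2, hg, by simp only [hgv]; rfl⟩

theorem coneOf_mono {n : ℕ} {Γ Γ' : Set (Fin n → ℕ)} (h : Γ ⊆ Γ') : coneOf Γ ⊆ coneOf Γ' := by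
  simp only [coneOf_eq_closure_hull]
  exact closure_mono (Submodule.span_mono (image_mono h))

theorem deltaOf_mono {d : ℕ} {Γ Γ' : Set (Fin (d + 1) → ℕ)} (h : Γ ⊆ Γ') :
    deltaOf Γ ⊆ deltaOf Γ' :=
  fun _ hx => coneOf_mono h hx

theorem gensGroup_mono {d : ℕ} {Γ Γ' : Set (Fin (d + 1) → ℕ)} (h : Γ ⊆ Γ') (hΓ : gensGroup Γ) :
    gensGroup Γ' :=
  eq_top_iff.2 (hΓ.ge.trans (AddSubgroup.closure_mono (image_mono h)))

theorem gensGroup_iff_span_int {d : ℕ} {Γ : Set (Fin (d + 1) → ℕ)} :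
    gensGroup Γ ↔
      Submodule.span ℤ ((fun γ : Fin (d + 1) → ℕ => fun i => (γ i : ℤ)) '' Γ) = ⊤ := by
  rw [gensGroup, ← Submodule.span_int_eq_addSubgroupClosure, Submodule.toAddSubgroup_eq_top]

theorem exists_finset_subset_gensGroup {d : ℕ} {Γ : Set (Fin (d + 1) → ℕ)} (hΓ : gensGroup Γ) :
    ∃ S : Finset (Fin (d + 1) → ℕ), ↑S ⊆ Γ ∧ gensGroup (S : Set (Fin (d + 1) → ℕ)) := by
  classical
  rw [gensGroup_iff_span_int] at hΓ
  obtain ⟨T, hTΓ, hT⟩ := (Submodule.fg_span_iff_fg_span_finset_subset _).1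
    (IsNoetherian.noetherian (R := ℤ) (M := Fin (d + 1) → ℤ) _)
  obtain ⟨S, hSΓ, rfl⟩ := Finset.subset_set_image_iff.1 hTΓ
  exact ⟨S, hSΓ, gensGroup_iff_span_int.2 (by rwa [← Finset.coe_image, ← hT])⟩

theorem span_natVecR_eq_top {d : ℕ} {Γ : Set (Fin (d + 1) → ℕ)} (hΓ : gensGroup Γ) :
    Submodule.span ℝ (natVecR '' Γ) = ⊤ := by
  let castL : (Fin (d + 1) → ℤ) →ₗ[ℤ] Fin (d + 1) → ℝ :=
    (Int.castAddHom ℝ).toIntLinearMap.compLeft _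
  have hrange : Submodule.span ℤ (natVecR '' Γ) = LinearMap.range castL := by
    rw [LinearMap.range_eq_map, ← gensGroup_iff_span_int.1 hΓ, Submodule.map_span, image_image]
    rfl
  rw [eq_top_iff, ← (Pi.basisFun ℝ _).span_eq, Submodule.span_le]
  rintro _ ⟨i, rfl⟩
  have hi : Pi.basisFun ℝ _ i ∈ Submodule.span ℤ (natVecR '' Γ) :=
    hrange ▸ ⟨Pi.single i 1, by ext j; simp [castL, Pi.single_apply]⟩
  exact Submodule.span_le_restrictScalars ℤ ℝ _ hi

theorem snoc_one_mem_interior_of_smul_mem {d : ℕ} {C : Set (Fin (d + 1) → ℝ)}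
    (hC : ∀ r : ℝ, 0 < r → ∀ y ∈ C, r • y ∈ C) {x : Fin d → ℝ}
    (hx : x ∈ interior {x : Fin d → ℝ | (Fin.snoc x 1 : Fin (d + 1) → ℝ) ∈ C}) :
    (Fin.snoc x 1 : Fin (d + 1) → ℝ) ∈ interior C := by
  let dehomogenize (y : Fin (d + 1) → ℝ) : Fin d → ℝ := (y (Fin.last d))⁻¹ • Fin.init y
  have hopen : IsOpen ({y | 0 < y (Fin.last d)} ∩
      dehomogenize ⁻¹' interior {x | (Fin.snoc x 1 : Fin (d + 1) → ℝ) ∈ C}) :=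
    ContinuousOn.isOpen_inter_preimage
      (fun y hy => ((continuous_apply _).continuousAt.inv₀ (ne_of_gt hy)).smul
        (continuous_id.finInit).continuousAt |>.continuousWithinAt)
      (isOpen_lt continuous_const (continuous_apply _)) isOpen_interior
  refine interior_maximal (fun y hy => ?_) hopen ⟨by simp, by simpa [dehomogenize] using hx⟩
  obtain ⟨hy : 0 < y (Fin.last d), hyC⟩ := hy
  have hy_eq : y = y (Fin.last d) • (Fin.snoc (dehomogenize y) 1 : Fin (d + 1) → ℝ) := by
    ext i
    refine Fin.lastCases ?_ (fun j => ?_) i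
    · simp
    · simp [dehomogenize, Fin.init, mul_inv_cancel_left₀ hy.ne']
  have hyΔ : dehomogenize y ∈ {x | (Fin.snoc x 1 : Fin (d + 1) → ℝ) ∈ C} := interior_subset hyC
  rw [hy_eq]
  exact hC _ hy _ hyΔ

theorem coneOf_smul_mem {n : ℕ} (Γ : Set (Fin n → ℕ)) {r : ℝ} (hr : 0 ≤ r) {y : Fin n → ℝ}
    (hy : y ∈ coneOf Γ) : r • y ∈ coneOf Γ := by
  rw [coneOf_eq_closure_hull] at hy ⊢
  exact map_mem_closure (continuous_const_smul r) hy fun _ hz => (hull ℝ _).smul_mem hr hz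

theorem mem_interior_deltaOf_iff {d : ℕ} {Γ : Set (Fin (d + 1) → ℕ)} {x : Fin d → ℝ} :
    x ∈ interior (deltaOf Γ) ↔ (Fin.snoc x 1 : Fin (d + 1) → ℝ) ∈ interior (coneOf Γ) :=
  ⟨snoc_one_mem_interior_of_smul_mem fun _ hr _ hy => coneOf_smul_mem Γ hr.le hy,
    fun hx => preimage_interior_subset_interior_preimage
      (continuous_id.finSnoc continuous_const) hx⟩

theorem exists_finset_mem_interior_coneOf {d : ℕ} {Γ : Set (Fin (d + 1) → ℕ)}
    {S₀ : Finset (Fin (d + 1) → ℕ)} (hS₀Γ : ↑S₀ ⊆ Γ)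
    (hS₀ : gensGroup (S₀ : Set (Fin (d + 1) → ℕ)))
    {p : Fin (d + 1) → ℝ} (hp : p ∈ interior (coneOf Γ)) :
    ∃ S : Finset (Fin (d + 1) → ℕ), S₀ ⊆ S ∧ ↑S ⊆ Γ ∧ p ∈ interior (coneOf (S : Set _)) := by
  classical
  obtain ⟨q, hq⟩ := interior_hull_nonempty (span_natVecR_eq_top hS₀)
  rw [coneOf_eq_closure_hull] at hp
  obtain ⟨F, hFΓ, hpF⟩ := exists_finset_mem_interior_hull_union hq hp
  obtain ⟨G, hGΓ, rfl⟩ := Finset.subset_set_image_iff.1 hFΓ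
  refine ⟨G ∪ S₀, Finset.subset_union_right, by simp [hGΓ, hS₀Γ], ?_⟩
  rw [coneOf_eq_closure_hull, Finset.coe_union, image_union]
  simpa using interior_mono subset_closure hpF

theorem finitely_generated_approximation_general (d : ℕ) (Γ : Set (Fin (d+1) → ℕ))
    (h0 : (0 : Fin (d+1) → ℕ) ∈ Γ)
    (hadd : ∀ x ∈ Γ, ∀ y ∈ Γ, x + y ∈ Γ)
    (hgen : gensGroup Γ)
    (D : Set (Fin d → ℝ)) (hDc : IsCompact D)
    (hD : D ⊆ interior (deltaOf Γ)) :
    ∃ S : Finset (Fin (d+1) → ℕ), (S : Set (Fin (d+1) → ℕ)) ⊆ Γ ∧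
      (↑(AddSubmonoid.closure (S : Set (Fin (d+1) → ℕ))) : Set (Fin (d+1) → ℕ)) ⊆ Γ ∧
      gensGroup (↑(AddSubmonoid.closure (S : Set (Fin (d+1) → ℕ))) : Set (Fin (d+1) → ℕ)) ∧
      D ⊆ interior
        (deltaOf (↑(AddSubmonoid.closure (S : Set (Fin (d+1) → ℕ))) : Set (Fin (d+1) → ℕ))) := by
  classical
  obtain ⟨S₀, hS₀Γ, hS₀⟩ := exists_finset_subset_gensGroup hgen
  let Admissible := {S : Finset (Fin (d + 1) → ℕ) // S₀ ⊆ S ∧ ↑S ⊆ Γ}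
  have : Nonempty Admissible := ⟨⟨S₀, subset_rfl, hS₀Γ⟩⟩
  let U (S : Admissible) : Set (Fin d → ℝ) := interior (deltaOf (S.1 : Set (Fin (d + 1) → ℕ)))
  have hcover : D ⊆ ⋃ S, U S := fun x hx => by
    obtain ⟨S, hS₀S, hSΓ, hxS⟩ :=
      exists_finset_mem_interior_coneOf hS₀Γ hS₀ (mem_interior_deltaOf_iff.1 (hD hx))
    exact mem_iUnion.2 ⟨⟨S, hS₀S, hSΓ⟩, mem_interior_deltaOf_iff.2 hxS⟩
  have hdirected : Directed (· ⊆ ·) U := by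
    rintro ⟨S, hS₀S, hSΓ⟩ ⟨T, -, hTΓ⟩
    refine ⟨⟨S ∪ T, hS₀S.trans Finset.subset_union_left, ?_⟩, ?_, ?_⟩
    · simpa using union_subset hSΓ hTΓ
    all_goals exact interior_mono (deltaOf_mono (by simp))
  obtain ⟨⟨S, hS₀S, hSΓ⟩, hDS⟩ :=
    hDc.elim_directed_cover U (fun _ => isOpen_interior) hcover hdirected
  refine ⟨S, hSΓ, fun x hx => ?_, gensGroup_mono ?_ hS₀, hDS.trans ?_⟩
  · exact AddSubmonoid.closure_induction (fun _ h => hSΓ h) h0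
      (fun a b _ _ ha hb => hadd a ha b hb) hx
  · exact (Finset.coe_subset.2 hS₀S).trans AddSubmonoid.subset_closure
  · exact interior_mono (deltaOf_mono AddSubmonoid.subset_closure)

/-- For any compact convex `D` contained in the interior of `Δ(Γ)`, there is a finitely
generated sub-semigroup `Γ' ⊆ Γ` generating `ℤ^{d+1}` as a group, with
`D ⊆ interior Δ(Γ')`. -/
theorem finitely_generated_approximation (d : ℕ) (hd : 1 ≤ d) (Γ : Set (Fin (d+1) → ℕ))
    (h0 : (0 : Fin (d+1) → ℕ) ∈ Γ)
    (hadd : ∀ x ∈ Γ, ∀ y ∈ Γ, x + y ∈ Γ)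
    (hgen : gensGroup Γ)
    (D : Set (Fin d → ℝ)) (hDc : IsCompact D) (hDconv : Convex ℝ D)
    (hD : D ⊆ interior (deltaOf Γ)) :
    ∃ S : Finset (Fin (d+1) → ℕ), (S : Set (Fin (d+1) → ℕ)) ⊆ Γ ∧
      (↑(AddSubmonoid.closure (S : Set (Fin (d+1) → ℕ))) : Set (Fin (d+1) → ℕ)) ⊆ Γ ∧
      gensGroup (↑(AddSubmonoid.closure (S : Set (Fin (d+1) → ℕ))) : Set (Fin (d+1) → ℕ)) ∧
      D ⊆ interior
        (deltaOf (↑(AddSubmonoid.closure (S : Set (Fin (d+1) → ℕ))) : Set (Fin (d+1) → ℕ))) :=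
  finitely_generated_approximation_general d Γ h0 hadd hgen D hDc hD
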